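/- For a Coxeter group W with Bruhat order, Möbius inversion over Bruhat intervals holds: if I_w := Σ_{v ≤ w} (-1)^{ℓ(w)-ℓ(v)} G_v in the free ℤ-module with basis {G_v}_{v∈W}, then G_w = Σ_{v ≤ w} I_v. -/

import Mathlib

/-!
For `u ≠ w` the alternating sum `∑_{u ≤ v ≤ w} (-1)^ℓ(v)` vanishes, by induction on `ℓ(w)` along a
right descent `s` of `w`. If `s` is not a descent of `u`, then `v ↦ vs` is a sign-reversing
involution of `[u, w]`; if it is, the sum over `[u, w]` is the sum over `[u, ws]` minus the sum over
`[us, ws]`. Both steps rest on Deodhar's property `v ≤ w ↔ v ≤ ws ∨ vs ≤ ws` (for `ws < w`), which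
follows from the subword property; the latter needs the strong exchange condition, obtained from
the sign representation of `W` on reflections × `{±1}`. Evaluating the claimed identity at `u`
gives exactly this alternating sum.
-/

open CoxeterSystem

variable {B W : Type*} [Group W] {M : CoxeterMatrix B}

/-- The Bruhat order on a Coxeter group: `u ≤ w` iff `w` is obtained from `u` by
repeatedly multiplying on the right by reflections that increase length. -/
def bruhatLE (cs : CoxeterSystem M W) (u w : W) : Prop :=
  Relation.ReflTransGen
    (fun a b => cs.length a < cs.length b ∧ ∃ t, cs.IsReflection t ∧ b = a * t) u w

/-- The standard parabolic subgroup generated by the simple reflections indexed by `I`. -/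
def parabolic (cs : CoxeterSystem M W) (I : Set B) : Subgroup W :=
  Subgroup.closure (cs.simple '' I)

/-- `ς` is a minimal length representative of its right coset `W_I ς`. -/
def IsMinCosetRep (cs : CoxeterSystem M W) (I : Set B) (ς : W) : Prop :=
  ∀ u ∈ parabolic cs I, cs.length ς ≤ cs.length (u * ς)

open List

theorem mul_mul_inv_eq_iff {G : Type*} [Group G] (g t x : G) :
    g * t * g⁻¹ = x ↔ t = g⁻¹ * x * g := by
  constructor <;> rintro rfl <;> group

namespace CoxeterSystem

variable (cs : CoxeterSystem M W)

local prefix:100 "s" => cs.simple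
local prefix:100 "π" => cs.wordProd
local prefix:100 "ℓ" => cs.length
local prefix:100 "ris " => cs.rightInvSeq

theorem simple_mul_mul_simple_eq_iff (i : B) (x y : W) :
    s i * x * s i = y ↔ x = s i * y * s i := by
  simpa only [cs.inv_simple] using mul_mul_inv_eq_iff (s i) x y

/- The sign representation behind the strong exchange condition: `s i` conjugates the reflection
and flips the sign exactly when the reflection is `s i` itself (elements of `W` that are not
reflections are carried along harmlessly). -/
open scoped Classical in
noncomputable def reflPerm (i : B) : Equiv.Perm (W × ℤˣ) :=
  Function.Involutive.toPerm (fun p => (s i * p.1 * s i, p.2 * if p.1 = s i then -1 else 1))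
    (by
      rintro ⟨t, e⟩
      have hfix : s i * t * s i = s i ↔ t = s i := by
        rw [simple_mul_mul_simple_eq_iff, simple_mul_simple_cancel_right]
      by_cases h : t = s i
      · subst h
        simp
      · simp only [hfix, h, if_false, mul_one]
        simp [mul_assoc])

open scoped Classical in
theorem reflPerm_apply (i : B) (t : W) (e : ℤˣ) :
    cs.reflPerm i (t, e) = (s i * t * s i, e * if t = s i then -1 else 1) := rfl

theorem simple_mul_pow_mul_simple (i j : B) (n : ℕ) :
    s j * (s i * s j) ^ n * s j = ((s i * s j) ^ n)⁻¹ := by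
  have h := conj_pow (a := s j) (b := s i * s j) (i := n)
  rw [cs.inv_simple] at h
  rw [← h, ← inv_pow]
  congr 1
  simp [mul_assoc]

theorem inv_pow_mul_simple (i j : B) (n : ℕ) :
    ((s i * s j) ^ n)⁻¹ * s j = s j * (s i * s j) ^ n := by
  rw [← simple_mul_pow_mul_simple, mul_assoc, simple_mul_simple_self, mul_one]

open scoped Classical in
theorem reflPerm_mul_pow_apply (i j : B) (k : ℕ) (t : W) (e : ℤˣ) :
    ((cs.reflPerm i * cs.reflPerm j) ^ k) (t, e) =
      ((s i * s j) ^ k * t * ((s i * s j) ^ k)⁻¹,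
        e * ∏ n ∈ Finset.range (2 * k), if t = s j * (s i * s j) ^ n then -1 else 1) := by
  induction k with
  | zero => simp
  | succ k ih =>
    have hj : (s i * s j) ^ k * t * ((s i * s j) ^ k)⁻¹ = s j ↔
        t = s j * (s i * s j) ^ (2 * k) := by
      rw [mul_mul_inv_eq_iff, inv_pow_mul_simple, mul_assoc, ← pow_add, two_mul]
    have hi : s j * ((s i * s j) ^ k * t * ((s i * s j) ^ k)⁻¹) * s j = s i ↔
        t = s j * (s i * s j) ^ (2 * k + 1) := by
      rw [simple_mul_mul_simple_eq_iff, mul_mul_inv_eq_iff, mul_assoc (s j) (s i),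
        ← mul_assoc _ (s j), inv_pow_mul_simple, mul_assoc (s j), ← pow_succ, mul_assoc,
        ← pow_add]
      ring_nf
    rw [pow_succ', Equiv.Perm.mul_apply, ih, Equiv.Perm.mul_apply, reflPerm_apply, reflPerm_apply,
      hj, hi, show 2 * (k + 1) = 2 * k + 1 + 1 by ring, Finset.prod_range_succ,
      Finset.prod_range_succ]
    simp only [pow_succ', mul_inv_rev, cs.inv_simple, mul_assoc]

/- The `2m` sign factors repeat with period `m` because `(s i * s j) ^ m = 1`, so their product is
a square in `ℤˣ`. -/
open scoped Classical in
theorem reflPerm_isLiftable : M.IsLiftable cs.reflPerm := by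
  intro i j
  refine Equiv.ext fun ⟨t, e⟩ => ?_
  have hpow : (s i * s j) ^ M i j = 1 := cs.simple_mul_simple_pow i j
  generalize M i j = m at hpow ⊢
  rw [reflPerm_mul_pow_apply, hpow, two_mul, Finset.prod_range_add]
  simp only [pow_add, hpow, one_mul, Int.units_mul_self, mul_one, inv_one, Equiv.Perm.one_apply]

noncomputable def reflRep : W →* Equiv.Perm (W × ℤˣ) :=
  cs.lift ⟨cs.reflPerm, cs.reflPerm_isLiftable⟩

open scoped Classical in
theorem reflRep_wordProd (ω : List B) (t : W) (e : ℤˣ) :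
    cs.reflRep (π ω) (t, e) = (π ω * t * (π ω)⁻¹, e * (-1) ^ (ris ω).count t) := by
  induction ω with
  | nil => simp
  | cons i ω ih =>
    rw [wordProd_cons, map_mul, Equiv.Perm.mul_apply, ih, reflRep,
      lift_apply_simple cs cs.reflPerm_isLiftable, reflPerm_apply, rightInvSeq, count_cons,
      mul_mul_inv_eq_iff _ t]
    by_cases h : t = (π ω)⁻¹ * s i * π ω
    · simp [h, pow_succ, mul_assoc]
    · rw [mul_assoc] at h
      simp [h, Ne.symm h, mul_assoc]

noncomputable def reflSign (w t : W) : ℤˣ := (cs.reflRep w (t, 1)).2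

theorem reflRep_apply (w t : W) (e : ℤˣ) :
    cs.reflRep w (t, e) = (w * t * w⁻¹, e * cs.reflSign w t) := by
  obtain ⟨ω, rfl⟩ := cs.wordProd_surjective w
  simp [reflSign, reflRep_wordProd]

open scoped Classical in
theorem reflSign_wordProd (ω : List B) (t : W) :
    cs.reflSign (π ω) t = (-1) ^ (ris ω).count t := by
  simp [reflSign, reflRep_wordProd]

theorem reflSign_one (t : W) : cs.reflSign 1 t = 1 := by
  simp [reflSign]

theorem reflSign_mul (x y t : W) :
    cs.reflSign (x * y) t = cs.reflSign y t * cs.reflSign x (y * t * y⁻¹) := by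
  rw [reflSign, map_mul, Equiv.Perm.mul_apply, reflRep_apply, reflRep_apply, one_mul]

theorem reflSign_simple_self (i : B) : cs.reflSign (s i) (s i) = -1 := by
  simpa using cs.reflSign_wordProd [i] (s i)

/- For `t = w * s i * w⁻¹` the cocycle rule splits `reflSign t t` into `reflSign (s i) (s i) = -1`
and the two factors of `reflSign (w * w⁻¹) t = 1`. -/
theorem reflSign_self {t : W} (ht : cs.IsReflection t) : cs.reflSign t t = -1 := by
  obtain ⟨w, i, rfl⟩ := ht
  have hcancel := cs.reflSign_mul w w⁻¹ (w * s i * w⁻¹)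
  have hconj : w⁻¹ * (w * s i * w⁻¹) * w⁻¹⁻¹ = s i := by group
  rw [mul_inv_cancel, reflSign_one, hconj] at hcancel
  rw [reflSign_mul, reflSign_mul, hconj, reflSign_simple_self, cs.inv_simple,
    simple_mul_simple_cancel_right, mul_left_comm, ← hcancel, mul_one]

theorem reflSign_mul_self {t : W} (ht : cs.IsReflection t) (w : W) :
    cs.reflSign (w * t) t = -cs.reflSign w t := by
  rw [reflSign_mul, reflSign_self cs ht, mul_inv_cancel_right, neg_one_mul]

open scoped Classical in
theorem mem_rightInvSeq_of_reflSign_eq_neg_one {ω : List B} {t : W}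
    (h : cs.reflSign (π ω) t = -1) : t ∈ ris ω := by
  rw [reflSign_wordProd] at h
  refine count_pos_iff.mp (Nat.pos_of_ne_zero fun h0 => ?_)
  rw [h0, pow_zero] at h
  exact absurd h (by decide)

theorem reflSign_eq_neg_one_of_isRightInversion {w t : W} (h : cs.IsRightInversion w t) :
    cs.reflSign w t = -1 := by
  refine (Int.units_eq_one_or _).resolve_left fun h1 => ?_
  obtain ⟨ω, hred, hω⟩ := cs.exists_isReduced (w * t)
  have hsign : cs.reflSign (π ω) t = -1 := by rw [← hω, reflSign_mul_self cs h.1, h1]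
  have hlt := (cs.isRightInversion_of_mem_rightInvSeq hred
    (cs.mem_rightInvSeq_of_reflSign_eq_neg_one hsign)).2
  rw [← hω, mul_assoc, h.1.mul_self, mul_one] at hlt
  exact lt_asymm hlt h.2

theorem mem_rightInvSeq_of_isRightInversion (ω : List B) {t : W}
    (h : cs.IsRightInversion (π ω) t) : t ∈ ris ω :=
  cs.mem_rightInvSeq_of_reflSign_eq_neg_one (cs.reflSign_eq_neg_one_of_isRightInversion h)

theorem exists_wordProd_eraseIdx_eq_of_isRightInversion (ω : List B) {t : W}
    (h : cs.IsRightInversion (π ω) t) : ∃ j < ω.length, π (ω.eraseIdx j) = π ω * t := by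
  obtain ⟨j, hj, rfl⟩ := mem_iff_getElem.mp (cs.mem_rightInvSeq_of_isRightInversion ω h)
  rw [length_rightInvSeq] at hj
  exact ⟨j, hj, by rw [← wordProd_mul_getD_rightInvSeq, getD_eq_getElem]⟩

theorem bruhatLE_refl (w : W) : bruhatLE cs w w := Relation.ReflTransGen.refl

theorem _root_.bruhatLE.trans {cs : CoxeterSystem M W} {u v w : W} (huv : bruhatLE cs u v)
    (hvw : bruhatLE cs v w) : bruhatLE cs u w :=
  Relation.ReflTransGen.trans huv hvw

theorem _root_.bruhatLE.length_le {cs : CoxeterSystem M W} {v w : W} (h : bruhatLE cs v w) :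
    cs.length v ≤ cs.length w := by
  induction h with
  | refl => exact le_rfl
  | tail _ hstep ih => exact ih.trans hstep.1.le

theorem _root_.bruhatLE.antisymm {cs : CoxeterSystem M W} {v w : W} (hvw : bruhatLE cs v w)
    (hwv : bruhatLE cs w v) : v = w := by
  cases hvw with
  | refl => rfl
  | tail hvx hstep => exact absurd (hwv.trans hvx).length_le (not_le.mpr hstep.1)

theorem eq_one_of_bruhatLE_one {v : W} (h : bruhatLE cs v 1) : v = 1 :=
  cs.length_eq_zero_iff.mp (Nat.le_zero.mp (cs.length_one ▸ h.length_le))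

theorem bruhatLE_mul_of_length_lt {w t : W} (ht : cs.IsReflection t) (h : ℓ w < ℓ (w * t)) :
    bruhatLE cs w (w * t) :=
  Relation.ReflTransGen.single ⟨h, t, ht, rfl⟩

theorem bruhatLE_mul_simple_of_not_isRightDescent {w : W} {i : B}
    (h : ¬cs.IsRightDescent w i) : bruhatLE cs w (w * s i) :=
  cs.bruhatLE_mul_of_length_lt (cs.isReflection_simple i) (by
    rw [cs.not_isRightDescent_iff.mp h]; exact Nat.lt_succ_self _)

theorem mul_simple_bruhatLE_of_isRightDescent {w : W} {i : B} (h : cs.IsRightDescent w i) :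
    bruhatLE cs (w * s i) w := by
  simpa using cs.bruhatLE_mul_simple_of_not_isRightDescent
    (cs.isRightDescent_iff_not_isRightDescent_mul.mp h)

theorem mul_eq_mul_simple_of_length_lt {u t : W} {i : B} (ht : cs.IsReflection t)
    (hlen : ℓ u < ℓ (u * t)) (hlt : ℓ (u * t * s i) < ℓ (u * s i)) : u * t = u * s i := by
  obtain ⟨υ, hυ, rfl⟩ := cs.exists_isReduced u
  have hπ : π (υ ++ [i]) = π υ * s i := by rw [wordProd_append, wordProd_singleton]
  have hconj : π υ * s i * (s i * t * s i) = π υ * t * s i := by simp [mul_assoc]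
  obtain ⟨j, hj, hexch⟩ := cs.exists_wordProd_eraseIdx_eq_of_isRightInversion (υ ++ [i])
    ⟨by simpa using ht.conj (s i), by rwa [hπ, hconj]⟩
  rw [hπ, hconj] at hexch
  rw [length_append, length_singleton] at hj
  rcases Nat.lt_succ_iff_lt_or_eq.mp hj with hj | rfl
  · rw [eraseIdx_append_of_lt_length hj, wordProd_append, wordProd_singleton,
      mul_left_inj] at hexch
    have hshort := cs.length_wordProd_le (υ.eraseIdx j)
    rw [hexch] at hshort
    have := length_eraseIdx_add_one hj
    have := hυ.eq
    omega
  · simp only [eraseIdx_append_of_length_le le_rfl, Nat.sub_self, eraseIdx_cons_zero,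
      append_nil] at hexch
    nth_rewrite 2 [hexch]
    rw [simple_mul_simple_cancel_right]

theorem bruhatLE_mul_simple_or_of_length_lt {u t : W} (ht : cs.IsReflection t)
    (hlen : ℓ u < ℓ (u * t)) (i : B) :
    bruhatLE cs (u * s i) (u * t * s i) ∨ bruhatLE cs (u * s i) (u * t) := by
  have ht' : cs.IsReflection (s i * t * s i) := by simpa using ht.conj (s i)
  have hconj : u * s i * (s i * t * s i) = u * t * s i := by simp [mul_assoc]
  rcases lt_or_gt_of_ne (ht'.length_mul_left_ne (u * s i)) with hlt | hgt
  · rw [hconj] at hlt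
    rw [cs.mul_eq_mul_simple_of_length_lt ht hlen hlt]
    exact .inr (cs.bruhatLE_refl _)
  · left
    rw [← hconj]
    exact cs.bruhatLE_mul_of_length_lt ht' hgt

theorem _root_.bruhatLE.mul_simple_le_mul_simple {cs : CoxeterSystem M W} {u x : W} {i : B}
    (h : bruhatLE cs u x) (hx : ¬cs.IsRightDescent x i) :
    bruhatLE cs (u * cs.simple i) (x * cs.simple i) := by
  induction h using Relation.ReflTransGen.head_induction_on with
  | refl => exact cs.bruhatLE_refl _
  | head hab hbx ih =>
    obtain ⟨hlen, t, ht, rfl⟩ := hab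
    rcases cs.bruhatLE_mul_simple_or_of_length_lt ht hlen i with h | h
    · exact h.trans ih
    · exact h.trans (bruhatLE.trans hbx (cs.bruhatLE_mul_simple_of_not_isRightDescent hx))

theorem bruhatLE_wordProd_of_sublist {τ ω : List B} (hsub : τ <+ ω) (hω : cs.IsReduced ω) :
    bruhatLE cs (π τ) (π ω) := by
  induction ω using List.reverseRecOn generalizing τ with
  | nil => simpa [sublist_nil.mp hsub] using cs.bruhatLE_refl 1
  | append_singleton ω i ih =>
    have hω' : cs.IsReduced ω := by simpa using hω.take ω.length
    have hascent : ¬cs.IsRightDescent (π ω) i := by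
      have := hω.eq
      rw [wordProd_append, wordProd_singleton, length_append, length_singleton, ← hω'.eq] at this
      rw [cs.not_isRightDescent_iff, this]
    obtain ⟨τ, τ', rfl, hτ, hτ'⟩ := sublist_append_iff.mp hsub
    rw [wordProd_append, wordProd_append, wordProd_singleton]
    rcases sublist_singleton.mp hτ' with rfl | rfl
    · simpa using (ih hτ hω').trans (cs.bruhatLE_mul_simple_of_not_isRightDescent hascent)
    · simpa using (ih hτ hω').mul_simple_le_mul_simple hascent

theorem exists_sublist_of_bruhatLE {v : W} {ω : List B} (h : bruhatLE cs v (π ω)) :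
    ∃ τ, τ <+ ω ∧ π τ = v := by
  induction h using Relation.ReflTransGen.head_induction_on with
  | refl => exact ⟨ω, Sublist.refl ω, rfl⟩
  | head hab _ ih =>
    obtain ⟨hlen, t, ht, rfl⟩ := hab
    obtain ⟨τ, hτ, hπτ⟩ := ih
    obtain ⟨j, -, hexch⟩ := cs.exists_wordProd_eraseIdx_eq_of_isRightInversion τ
      ⟨ht, by rwa [hπτ, mul_assoc, ht.mul_self, mul_one]⟩
    exact ⟨τ.eraseIdx j, (eraseIdx_sublist τ j).trans hτ,
      by rw [hexch, hπτ, mul_assoc, ht.mul_self, mul_one]⟩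

theorem finite_setOf_bruhatLE (w : W) : {v | bruhatLE cs v w}.Finite := by
  obtain ⟨ω, rfl⟩ := cs.wordProd_surjective w
  refine (ω.sublists.map cs.wordProd).finite_toSet.subset fun v hv => ?_
  obtain ⟨τ, hτ, rfl⟩ := cs.exists_sublist_of_bruhatLE hv
  exact mem_map.mpr ⟨τ, mem_sublists.mpr hτ, rfl⟩

theorem bruhatLE_iff_of_isRightDescent {w : W} {i : B} (hw : cs.IsRightDescent w i) (v : W) :
    bruhatLE cs v w ↔ bruhatLE cs v (w * s i) ∨ bruhatLE cs (v * s i) (w * s i) := by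
  obtain ⟨ω, hω, hωw⟩ := cs.exists_isReduced (w * s i)
  have hw' : π (ω ++ [i]) = w := by
    rw [wordProd_append, wordProd_singleton, ← hωw, simple_mul_simple_cancel_right]
  have hred : cs.IsReduced (ω ++ [i]) := by
    rw [IsReduced, hw', length_append, length_singleton, ← hω.eq, ← hωw,
      cs.isRightDescent_iff.mp hw]
  constructor
  · intro h
    rw [← hw'] at h
    obtain ⟨ρ, hρ, rfl⟩ := cs.exists_sublist_of_bruhatLE h
    obtain ⟨τ, τ', rfl, hτ, hτ'⟩ := sublist_append_iff.mp hρ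
    rw [hωw]
    rcases sublist_singleton.mp hτ' with rfl | rfl
    · simpa using Or.inl (cs.bruhatLE_wordProd_of_sublist hτ hω)
    · simpa [wordProd_append] using Or.inr (cs.bruhatLE_wordProd_of_sublist hτ hω)
  · rintro (h | h)
    · exact h.trans (cs.mul_simple_bruhatLE_of_isRightDescent hw)
    · simpa using h.mul_simple_le_mul_simple (cs.isRightDescent_iff_not_isRightDescent_mul.mp hw)

theorem _root_.bruhatLE.mul_simple_le_of_isRightDescent {cs : CoxeterSystem M W} {v w : W}
    {i : B} (h : bruhatLE cs v w) (hw : cs.IsRightDescent w i) :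
    bruhatLE cs (v * cs.simple i) w := by
  rw [cs.bruhatLE_iff_of_isRightDescent hw] at h ⊢
  simpa [or_comm] using h

theorem _root_.bruhatLE.le_mul_simple_of_not_isRightDescent {cs : CoxeterSystem M W} {u v : W}
    {i : B} (h : bruhatLE cs u v) (hu : ¬cs.IsRightDescent u i) :
    bruhatLE cs u (v * cs.simple i) := by
  by_cases hv : cs.IsRightDescent v i
  · rcases (cs.bruhatLE_iff_of_isRightDescent hv u).mp h with h | h
    · exact h
    · exact (cs.bruhatLE_mul_simple_of_not_isRightDescent hu).trans h
  · exact h.trans (cs.bruhatLE_mul_simple_of_not_isRightDescent hv)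


noncomputable def bruhatIcc (u w : W) : Finset W :=
  ((cs.finite_setOf_bruhatLE w).subset (t := {v | bruhatLE cs u v ∧ bruhatLE cs v w})
    fun _ hv => hv.2).toFinset

theorem mem_bruhatIcc {u v w : W} :
    v ∈ cs.bruhatIcc u w ↔ bruhatLE cs u v ∧ bruhatLE cs v w := by
  simp [bruhatIcc]

theorem bruhatIcc_self (w : W) : cs.bruhatIcc w w = {w} := by
  ext v
  rw [mem_bruhatIcc, Finset.mem_singleton]
  constructor
  · rintro ⟨hwv, hvw⟩
    exact hvw.antisymm hwv
  · rintro rfl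
    exact ⟨cs.bruhatLE_refl v, cs.bruhatLE_refl v⟩

theorem neg_one_pow_length_mul_simple (w : W) (i : B) :
    (-1 : ℤ) ^ ℓ (w * s i) = -(-1) ^ ℓ w := by
  rcases cs.length_mul_simple w i with h | h
  · rw [h, pow_succ, mul_neg_one]
  · rw [← h, pow_succ, mul_neg_one, neg_neg]

theorem sum_neg_one_pow_length_eq_zero {S : Finset W} {i : B} (hS : ∀ v ∈ S, v * s i ∈ S) :
    ∑ v ∈ S, (-1 : ℤ) ^ ℓ v = 0 :=
  Finset.sum_involution (fun v _ => v * s i)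
    (fun v _ => by rw [neg_one_pow_length_mul_simple, add_neg_cancel])
    (fun v _ _ hv => cs.length_mul_simple_ne v i (congrArg cs.length hv))
    hS (fun _ _ => simple_mul_simple_cancel_right cs _)

theorem sum_bruhatIcc_eq_zero_of_not_isRightDescent {u w : W} {i : B}
    (hu : ¬cs.IsRightDescent u i) (hw : cs.IsRightDescent w i) :
    ∑ v ∈ cs.bruhatIcc u w, (-1 : ℤ) ^ ℓ v = 0 :=
  cs.sum_neg_one_pow_length_eq_zero fun v hv => by
    rw [mem_bruhatIcc] at hv ⊢
    exact ⟨hv.1.le_mul_simple_of_not_isRightDescent hu, hv.2.mul_simple_le_of_isRightDescent hw⟩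

theorem mem_bruhatIcc_iff_mul_simple_mem {u v w : W} {i : B} (hu : cs.IsRightDescent u i)
    (hw : cs.IsRightDescent w i) (hv : ¬bruhatLE cs v (w * s i)) :
    v ∈ cs.bruhatIcc u w ↔ v * s i ∈ cs.bruhatIcc (u * s i) (w * s i) := by
  rw [mem_bruhatIcc, mem_bruhatIcc, cs.bruhatLE_iff_of_isRightDescent hw, or_iff_right hv]
  refine and_congr_left fun hvs => ?_
  have hvdesc : cs.IsRightDescent v i := by
    by_contra h
    exact hv ((cs.bruhatLE_mul_simple_of_not_isRightDescent h).trans hvs)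
  rw [cs.bruhatLE_iff_of_isRightDescent hvdesc,
    or_iff_right_of_imp (cs.mul_simple_bruhatLE_of_isRightDescent hu).trans]

/- Split `[u, w]` according to `v ≤ ws`. The part below `ws` is `[u, ws]`; the rest is carried by
`v ↦ vs` onto the `x ∈ [us, ws]` with `xs ≰ ws`, and the other elements of `[us, ws]` form a set
closed under `x ↦ xs`, which contributes nothing. -/
theorem sum_bruhatIcc_eq_sub_of_isRightDescent {u w : W} {i : B}
    (hu : cs.IsRightDescent u i) (hw : cs.IsRightDescent w i) :
    ∑ v ∈ cs.bruhatIcc u w, (-1 : ℤ) ^ ℓ v =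
      ∑ v ∈ cs.bruhatIcc u (w * s i), (-1 : ℤ) ^ ℓ v -
        ∑ v ∈ cs.bruhatIcc (u * s i) (w * s i), (-1 : ℤ) ^ ℓ v := by
  classical
  have hlow : (cs.bruhatIcc u w).filter (bruhatLE cs · (w * s i)) = cs.bruhatIcc u (w * s i) := by
    ext v
    simp only [Finset.mem_filter, mem_bruhatIcc]
    exact ⟨fun ⟨⟨huv, _⟩, hv⟩ => ⟨huv, hv⟩,
      fun ⟨huv, hv⟩ => ⟨⟨huv, hv.trans (cs.mul_simple_bruhatLE_of_isRightDescent hw)⟩, hv⟩⟩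
  have hclosed : ∑ x ∈ (cs.bruhatIcc (u * s i) (w * s i)).filter
      (fun x => bruhatLE cs (x * s i) (w * s i)), (-1 : ℤ) ^ ℓ x = 0 := by
    have hus := cs.isRightDescent_iff_not_isRightDescent_mul.mp hu
    refine cs.sum_neg_one_pow_length_eq_zero (i := i) fun x hx => ?_
    simp only [Finset.mem_filter, mem_bruhatIcc, simple_mul_simple_cancel_right] at hx ⊢
    exact ⟨⟨hx.1.1.le_mul_simple_of_not_isRightDescent hus, hx.2⟩, hx.1.2⟩
  have hshift : ∑ v ∈ (cs.bruhatIcc u w).filter (¬bruhatLE cs · (w * s i)), (-1 : ℤ) ^ ℓ v =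
      -∑ x ∈ (cs.bruhatIcc (u * s i) (w * s i)).filter
        (fun x => ¬bruhatLE cs (x * s i) (w * s i)), (-1 : ℤ) ^ ℓ x := by
    rw [← Finset.sum_neg_distrib]
    refine Finset.sum_nbij' (· * s i) (· * s i) (fun v hv => ?_) (fun x hx => ?_)
      (fun _ _ => simple_mul_simple_cancel_right cs _)
      (fun _ _ => simple_mul_simple_cancel_right cs _)
      (fun v _ => by rw [neg_one_pow_length_mul_simple, neg_neg])
    · simp only [Finset.mem_filter, simple_mul_simple_cancel_right] at hv ⊢
      exact ⟨(cs.mem_bruhatIcc_iff_mul_simple_mem hu hw hv.2).mp hv.1, hv.2⟩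
    · simp only [Finset.mem_filter] at hx ⊢
      refine ⟨(cs.mem_bruhatIcc_iff_mul_simple_mem hu hw hx.2).mpr ?_, hx.2⟩
      rw [simple_mul_simple_cancel_right]
      exact hx.1
  rw [← Finset.sum_filter_add_sum_filter_not (cs.bruhatIcc u w) (bruhatLE cs · (w * s i)),
    ← Finset.sum_filter_add_sum_filter_not (cs.bruhatIcc (u * s i) (w * s i))
      (fun x => bruhatLE cs (x * s i) (w * s i)), hlow, hclosed, hshift]
  ring

theorem sum_bruhatIcc_neg_one_pow_length_of_ne {u w : W} (h : u ≠ w) :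
    ∑ v ∈ cs.bruhatIcc u w, (-1 : ℤ) ^ ℓ v = 0 := by
  obtain ⟨n, hn⟩ : ∃ n, ℓ w = n := ⟨_, rfl⟩
  induction n using Nat.strong_induction_on generalizing u w with
  | _ n ih =>
  by_cases hw1 : w = 1
  · subst hw1
    refine Finset.sum_eq_zero fun v hv => absurd ?_ h
    rw [mem_bruhatIcc] at hv
    exact cs.eq_one_of_bruhatLE_one (hv.1.trans hv.2)
  obtain ⟨i, hw⟩ := cs.exists_rightDescent_of_ne_one hw1
  by_cases hu : cs.IsRightDescent u i
  · have hlt : ℓ (w * s i) < n := hn ▸ hw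
    rw [cs.sum_bruhatIcc_eq_sub_of_isRightDescent hu hw, ih _ hlt ?_ rfl, ih _ hlt ?_ rfl,
      sub_zero]
    · exact fun h' => h (mul_right_cancel h')
    · rintro rfl
      exact absurd hu (cs.isRightDescent_iff_not_isRightDescent_mul.mp hw)
  · exact cs.sum_bruhatIcc_eq_zero_of_not_isRightDescent hu hw

theorem sum_bruhatIcc_neg_one_pow_sub_length (u w : W) [Decidable (u = w)] :
    ∑ v ∈ cs.bruhatIcc u w, (-1 : ℤ) ^ (ℓ v - ℓ u) = if u = w then 1 else 0 := by
  split_ifs with h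
  · simp [h, bruhatIcc_self]
  · have hsign : ∀ v ∈ cs.bruhatIcc u w, (-1 : ℤ) ^ (ℓ v - ℓ u) = (-1) ^ ℓ u * (-1) ^ ℓ v := by
      intro v hv
      obtain ⟨c, hc⟩ := Nat.exists_eq_add_of_le ((cs.mem_bruhatIcc.mp hv).1.length_le)
      rw [hc, Nat.add_sub_cancel_left, pow_add, ← mul_assoc, ← mul_pow, neg_one_mul, neg_neg,
        one_pow, one_mul]
    rw [Finset.sum_congr rfl hsign, ← Finset.mul_sum, cs.sum_bruhatIcc_neg_one_pow_length_of_ne h,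
      mul_zero]

end CoxeterSystem

/-- Möbius inversion over Bruhat intervals: with I_w = Σ_{v ≤ w} (-1)^{ℓ(w)-ℓ(v)} G_v in the
free ℤ-module with basis {G_v}, one has G_w = Σ_{v ≤ w} I_v. -/
theorem bruhat_mobius_inversion (cs : CoxeterSystem M W)
    (hfin : ∀ w : W, {v | bruhatLE cs v w}.Finite)
    (I : W → (W →₀ ℤ))
    (hI : ∀ w, I w = ∑ v ∈ (hfin w).toFinset,
      ((-1 : ℤ) ^ (cs.length w - cs.length v)) • Finsupp.single v (1 : ℤ)) :
    ∀ w : W, Finsupp.single w (1 : ℤ) = ∑ v ∈ (hfin w).toFinset, I v := by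
  classical
  intro w
  ext u
  have hcoeff (v : W) :
      I v u = if bruhatLE cs u v then (-1 : ℤ) ^ (cs.length v - cs.length u) else 0 := by
    simp [hI, Finsupp.finsetSum_apply, Finsupp.single_apply]
  have hinterval : (hfin w).toFinset.filter (bruhatLE cs u ·) = cs.bruhatIcc u w := by
    ext v
    simp [cs.mem_bruhatIcc, and_comm]
  rw [Finsupp.finsetSum_apply, Finset.sum_congr rfl fun v _ => hcoeff v, ← Finset.sum_filter,
    hinterval, cs.sum_bruhatIcc_neg_one_pow_sub_length, Finsupp.single_apply]
  simp only [eq_comm]
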